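/- Every permutation σ of {1,…,n} can be transformed into the reverse patience word RPW(R(σ)) of its pile configuration by a finite sequence of allowed interchanges, each of which preserves the pile configuration. -/

import Mathlib

/-- One step of Patience Sorting: place card `c` on the leftmost pile whose top
(head) is larger than `c`, or start a new pile on the right.  Piles are stored
top-first, so each pile is an increasing list whose head is the top (smallest) card. -/
def PSinsert (c : ℕ) : List (List ℕ) → List (List ℕ)
  | [] => [[c]]
  | [] :: ps => [] :: PSinsert c ps
  | (x :: p) :: ps =>
      if c < x then (c :: x :: p) :: ps else (x :: p) :: PSinsert c ps

/-- The pile configuration `R(w)` produced by Patience Sorting applied to the word `w`. -/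
def PSpiles (w : List ℕ) : List (List ℕ) :=
  w.foldl (fun ps c => PSinsert c ps) []

/-- The one-line word (with values `1,…,n`) of a permutation of `Fin n`. -/
def permWord {n : ℕ} (σ : Equiv.Perm (Fin n)) : List ℕ :=
  List.ofFn fun i => (σ i : ℕ) + 1

/-- `AllowedInterchange σ τ`: `τ` is obtained from `σ` by swapping the adjacent entries
`σ(j), σ(j+1)` of an occurrence `i < j` of the generalized pattern 2-31
(`σ(j+1) < σ(i) < σ(j)`) that is not contained in any occurrence of 3-1-42
(there is no `k` with `i < k < j` and `σ(k) < σ(j+1)`). -/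
def AllowedInterchange {n : ℕ} (σ τ : Equiv.Perm (Fin n)) : Prop :=
  ∃ (i j : ℕ) (hi : i < n) (hj : j + 1 < n),
    i < j ∧
    σ ⟨j + 1, hj⟩ < σ ⟨i, hi⟩ ∧ σ ⟨i, hi⟩ < σ ⟨j, Nat.lt_of_succ_lt hj⟩ ∧
    (¬ ∃ (k : ℕ) (hk : k < n), i < k ∧ k < j ∧ σ ⟨k, hk⟩ < σ ⟨j + 1, hj⟩) ∧
    τ = σ * Equiv.swap ⟨j, Nat.lt_of_succ_lt hj⟩ ⟨j + 1, hj⟩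

/-- The reverse patience word of a pile configuration: concatenate the piles
left to right, each pile written in decreasing order (bottom to top). -/
def RPW (P : List (List ℕ)) : List ℕ := (P.map List.reverse).flatten

/-!
The letters of `σ` are inserted one at a time, keeping the word in the form
`RPW (R prefix) ++ suffix`. If the next letter `c` lands on the pile `r` with top `t`, then `t` is
the last letter contributed by the piles up to `r`, and `c` only has to travel left past the letters
of the later piles, all larger than `t`. Each move swaps `x c` with `c < t < x`: `t` is the `2` of a
`2-31` occurrence, the letters strictly between are larger than `t`, hence no `3-1-42` contains it,
and the pile configuration is unchanged because after the common prefix `c` goes on `r` while `x`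
passes over `r`, and these two insertions commute.
-/

theorem PSinsert_append_of_headI_le {c : ℕ} {R : List (List ℕ)} (hR : ∀ q ∈ R, q.headI ≤ c)
    (Z : List (List ℕ)) : PSinsert c (R ++ Z) = R ++ PSinsert c Z := by
  induction R with
  | nil => rfl
  | cons q R ih =>
    have hq := hR q (by simp)
    rcases q with _ | ⟨x, p⟩
    · simp [PSinsert, ih (fun q hq => hR q (by simp [hq]))]
    · simp only [List.headI] at hq
      simp [PSinsert, not_lt.2 hq, ih (fun q hq => hR q (by simp [hq]))]

theorem PSinsert_append_cons_of_lt {c x : ℕ} {R : List (List ℕ)} (hR : ∀ q ∈ R, q.headI ≤ c)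
    (hcx : c < x) (p : List ℕ) (Z : List (List ℕ)) :
    PSinsert c (R ++ (x :: p) :: Z) = R ++ (c :: x :: p) :: Z := by
  simp [PSinsert_append_of_headI_le hR, PSinsert, hcx]

theorem PSinsert_cases (c : ℕ) (P : List (List ℕ)) :
    (∀ q ∈ P, q.headI ≤ c) ∧ PSinsert c P = P ++ [[c]] ∨
    ∃ R x p Z, P = R ++ (x :: p) :: Z ∧ (∀ q ∈ R, q.headI ≤ c) ∧ c < x ∧
      PSinsert c P = R ++ (c :: x :: p) :: Z := by
  induction P with
  | nil => simp [PSinsert]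
  | cons q P ih =>
    by_cases hcq : c < q.headI
    · rcases q with _ | ⟨x, p⟩
      · simp at hcq
      · simp only [List.headI] at hcq
        exact Or.inr ⟨[], x, p, P, rfl, by simp, hcq, by simp [PSinsert, hcq]⟩
    have hq : ∀ q' ∈ [q], q'.headI ≤ c := by simpa using hcq
    have hins := PSinsert_append_of_headI_le hq P
    simp only [List.singleton_append] at hins
    rcases ih with ⟨hP, hins'⟩ | ⟨R, x, p, Z, rfl, hR, hcx, hins'⟩
    · exact Or.inl ⟨by simp_all, by simp [hins, hins']⟩
    · exact Or.inr ⟨q :: R, x, p, Z, rfl, by simp_all, hcx, by simp [hins, hins']⟩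

theorem foldl_PSinsert_append_of_headI_le {R : List (List ℕ)} {E : List ℕ}
    (hRE : ∀ e ∈ E, ∀ q ∈ R, q.headI ≤ e) (Z : List (List ℕ)) :
    E.foldl (fun ps c => PSinsert c ps) (R ++ Z) = R ++ E.foldl (fun ps c => PSinsert c ps) Z := by
  induction E generalizing Z with
  | nil => rfl
  | cons e E ih =>
    simp only [List.foldl_cons]
    rw [PSinsert_append_of_headI_le (hRE e (by simp)), ih (fun e' he' => hRE e' (by simp [he']))]

theorem PSinsert_comm_of_lt {R Z : List (List ℕ)} {c t x : ℕ} {p : List ℕ}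
    (hR : ∀ q ∈ R, q.headI ≤ c) (hct : c < t) (htx : t < x) :
    PSinsert c (PSinsert x (R ++ (t :: p) :: Z)) =
      PSinsert x (PSinsert c (R ++ (t :: p) :: Z)) := by
  have hxR : ∀ q ∈ R, q.headI ≤ x := fun q hq => (hR q hq).trans (hct.trans htx).le
  have skip : ∀ q, q.headI ≤ x → PSinsert x (R ++ q :: Z) = R ++ q :: PSinsert x Z := fun q hq => by
    simpa using PSinsert_append_of_headI_le (R := R ++ [q])
      (by simpa [or_imp, forall_and] using ⟨hxR, hq⟩) Z
  rw [skip (t :: p) htx.le, PSinsert_append_cons_of_lt hR hct, PSinsert_append_cons_of_lt hR hct,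
    skip (c :: t :: p) (by simp only [List.headI]; omega)]

theorem PSpiles_append (u v : List ℕ) :
    PSpiles (u ++ v) = v.foldl (fun ps c => PSinsert c ps) (PSpiles u) :=
  List.foldl_append

theorem headI_le_of_mem {q : List ℕ} (hq : q.Pairwise (· < ·)) {e : ℕ} (he : e ∈ q) :
    q.headI ≤ e := by
  rcases q with _ | ⟨a, q⟩
  · simp at he
  · rcases List.mem_cons.1 he with rfl | he
    · exact le_rfl
    · exact ((List.pairwise_cons.1 hq).1 e he).le

theorem perm_flatten_PSinsert (c : ℕ) (P : List (List ℕ)) :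
    (PSinsert c P).flatten.Perm (c :: P.flatten) := by
  rcases PSinsert_cases c P with ⟨-, h⟩ | ⟨R, x, p, Z, rfl, -, -, h⟩ <;> rw [h]
  · simp [List.perm_append_singleton]
  · simp [List.perm_middle]

theorem perm_flatten_PSpiles (w : List ℕ) : (PSpiles w).flatten.Perm w := by
  induction w using List.reverseRecOn with
  | nil => rfl
  | append_singleton u c ih =>
    rw [PSpiles, List.foldl_concat]
    exact (perm_flatten_PSinsert c _).trans
      ((ih.cons c).trans (List.perm_append_singleton c u).symm)

structure ValidPiles (P : List (List ℕ)) : Prop where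
  ne_nil : ∀ q ∈ P, q ≠ []
  sorted : ∀ q ∈ P, q.Pairwise (· < ·)
  headI_lt : (P.map List.headI).Pairwise (· < ·)

theorem ValidPiles.sublist {P Q : List (List ℕ)} (hQ : ValidPiles Q) (h : P.Sublist Q) :
    ValidPiles P :=
  ⟨fun q hq => hQ.ne_nil q (h.subset hq), fun q hq => hQ.sorted q (h.subset hq),
    (hQ.headI_lt.sublist (h.map _))⟩

theorem ValidPiles.PSinsert {P : List (List ℕ)} {c : ℕ} (hP : ValidPiles P) (hc : c ∉ P.flatten) :
    ValidPiles (PSinsert c P) := by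
  have hlt : ∀ q ∈ P, q.headI ≤ c → q.headI < c := by
    intro q hq hle
    refine lt_of_le_of_ne hle fun h => hc (List.mem_flatten.2 ⟨q, hq, h ▸ ?_⟩)
    obtain ⟨a, q', rfl⟩ := List.exists_cons_of_ne_nil (hP.ne_nil q hq)
    simp
  rcases PSinsert_cases c P with ⟨hskip, h⟩ | ⟨R, x, p, Z, rfl, hR, hcx, h⟩ <;> rw [h]
  · refine ⟨?_, ?_, ?_⟩
    · grind [hP.ne_nil]
    · grind [hP.sorted]
    · simpa [List.pairwise_append] using ⟨hP.headI_lt, fun q hq => hlt q hq (hskip q hq)⟩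
  · have hxp := hP.sorted (x :: p) (by simp)
    have hcxp : (c :: x :: p).Pairwise (· < ·) :=
      List.pairwise_cons.2 ⟨fun e he => hcx.trans_le (headI_le_of_mem hxp he), hxp⟩
    refine ⟨?_, ?_, ?_⟩
    · grind [hP.ne_nil]
    · grind [hP.sorted]
    · have := hP.headI_lt
      simp only [List.map_append, List.map_cons, List.pairwise_append, List.pairwise_cons,
        List.headI_cons] at this ⊢
      grind

theorem validPiles_PSpiles {w : List ℕ} (hw : w.Nodup) : ValidPiles (PSpiles w) := by
  induction w using List.reverseRecOn with
  | nil => exact ⟨by simp [PSpiles], by simp [PSpiles], by simp [PSpiles]⟩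
  | append_singleton u c ih =>
    rw [List.nodup_append] at hw
    rw [PSpiles, List.foldl_concat]
    refine (ih hw.1).PSinsert fun hc => ?_
    exact hw.2.2 c ((perm_flatten_PSpiles u).subset hc) c (by simp) rfl

theorem ValidPiles.headI_lt_of_mem_flatten {R Z : List (List ℕ)} {q : List ℕ} {e : ℕ}
    (h : ValidPiles (R ++ q :: Z)) (he : e ∈ Z.flatten) : q.headI < e := by
  obtain ⟨q', hq', heq'⟩ := List.mem_flatten.1 he
  have hheads := h.headI_lt
  simp only [List.map_append, List.map_cons, List.pairwise_append, List.pairwise_cons] at hheads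
  exact (hheads.2.1.1 _ (List.mem_map_of_mem hq')).trans_le
    (headI_le_of_mem (h.sorted q' (by simp [hq'])) heq')

theorem mem_RPW {P : List (List ℕ)} {e : ℕ} : e ∈ RPW P ↔ e ∈ P.flatten := by
  simp only [RPW, List.mem_flatten, List.mem_map]
  grind

theorem foldl_PSinsert_reverse_cons (P₀ : List (List ℕ)) (a : ℕ) (r : List ℕ)
    (hr : (a :: r).Pairwise (· < ·)) (hP₀ : ∀ q ∈ P₀, q.headI < a) :
    (a :: r).reverse.foldl (fun ps c => PSinsert c ps) P₀ = P₀ ++ [a :: r] := by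
  induction r generalizing a with
  | nil => simpa [PSinsert] using PSinsert_append_of_headI_le (fun q hq => (hP₀ q hq).le) []
  | cons b r ih =>
    have hab : a < b := List.rel_of_pairwise_cons hr (by simp)
    rw [List.reverse_cons, List.foldl_concat, ih b hr.of_cons fun q hq => (hP₀ q hq).trans hab]
    simpa using PSinsert_append_cons_of_lt (fun q hq => (hP₀ q hq).le) hab r []

theorem PSpiles_RPW {P : List (List ℕ)} (hP : ValidPiles P) : PSpiles (RPW P) = P := by
  induction P using List.reverseRecOn with
  | nil => rfl
  | append_singleton P₀ r ih =>
    obtain ⟨a, r, rfl⟩ := List.exists_cons_of_ne_nil (hP.ne_nil r (by simp))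
    have hheads := hP.headI_lt
    simp only [List.map_append, List.map_singleton, List.headI_cons, List.pairwise_append,
      List.pairwise_singleton, List.mem_singleton, forall_eq] at hheads
    rw [RPW, List.map_append, List.flatten_append, PSpiles, List.foldl_append, ← RPW, ← PSpiles,
      ih (hP.sublist (by simp))]
    simpa using foldl_PSinsert_reverse_cons P₀ a r (hP.sorted _ (by simp))
      (fun q hq => hheads.2.2 _ (List.mem_map_of_mem hq))

theorem length_permWord {n : ℕ} (σ : Equiv.Perm (Fin n)) : (permWord σ).length = n := by
  simp [permWord]

theorem getElem_permWord {n : ℕ} (σ : Equiv.Perm (Fin n)) (k : ℕ) (hk : k < (permWord σ).length) :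
    (permWord σ)[k] = σ ⟨k, length_permWord σ ▸ hk⟩ + 1 := by
  simp [permWord]

theorem val_add_one_eq_getElem {n : ℕ} {σ : Equiv.Perm (Fin n)} {w : List ℕ}
    (h : permWord σ = w) (k : ℕ) (hk : k < n) :
    (σ ⟨k, hk⟩ : ℕ) + 1 = w[k]'(by rw [← h, length_permWord]; exact hk) := by
  subst h; rw [getElem_permWord]

theorem permWord_mul_swap {n : ℕ} {σ : Equiv.Perm (Fin n)} {A B : List ℕ} {x c : ℕ}
    (h : permWord σ = A ++ x :: c :: B) (hA : A.length + 1 < n) :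
    permWord (σ * Equiv.swap ⟨A.length, by omega⟩ ⟨A.length + 1, hA⟩) = A ++ c :: x :: B := by
  have hn : n = A.length + 2 + B.length := by
    have := length_permWord σ; simp [h] at this; omega
  apply List.ext_getElem (by simp [length_permWord]; omega)
  intro k hk _
  rw [getElem_permWord, Equiv.Perm.mul_apply, Equiv.swap_apply_def]
  split_ifs with h1 h2
  · obtain rfl : k = A.length := congrArg Fin.val h1
    simp [val_add_one_eq_getElem h]
  · obtain rfl : k = A.length + 1 := congrArg Fin.val h2
    simp [val_add_one_eq_getElem h]
  · rw [val_add_one_eq_getElem h]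
    simp only [Fin.ext_iff] at h1 h2
    simp only [List.getElem_append, List.getElem_cons]
    grind

theorem exists_allowedInterchange {n : ℕ} {σ : Equiv.Perm (Fin n)} {F E D : List ℕ} {t x c : ℕ}
    (h : permWord σ = F ++ t :: E ++ x :: c :: D) (hct : c < t) (htx : t < x)
    (hE : ∀ e ∈ E, c < e) :
    ∃ τ, AllowedInterchange σ τ ∧ permWord τ = F ++ t :: E ++ c :: x :: D := by
  have hn : n = F.length + E.length + 3 + D.length := by
    have := length_permWord σ; simp [h] at this; omega
  have hσ := val_add_one_eq_getElem h
  have hA : (F ++ t :: E).length + 1 < n := by simp; omega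
  have ht : (σ ⟨F.length, by omega⟩ : ℕ) + 1 = t := by rw [hσ]; simp
  have hx : (σ ⟨(F ++ t :: E).length, by omega⟩ : ℕ) + 1 = x := by rw [hσ]; simp
  have hc : (σ ⟨(F ++ t :: E).length + 1, hA⟩ : ℕ) + 1 = c := by
    rw [hσ, List.getElem_append_right (by omega)]; simp
  refine ⟨_, ⟨F.length, (F ++ t :: E).length, by omega, hA, by simp, ?_, ?_, ?_, rfl⟩,
    permWord_mul_swap h hA⟩
  · rw [Fin.lt_def]; omega
  · rw [Fin.lt_def]; omega
  · rintro ⟨k, hk, hFk, hkE, hlt⟩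
    have hmem : (σ ⟨k, hk⟩ : ℕ) + 1 ∈ E := by
      rw [hσ, List.getElem_append_left (by simpa using hkE), List.getElem_append_right (by omega)]
      grind
    have := hE _ hmem
    rw [Fin.lt_def] at hlt; omega

theorem nodup_permWord {n : ℕ} (σ : Equiv.Perm (Fin n)) : (permWord σ).Nodup :=
  List.nodup_ofFn.2 fun i j h => σ.injective (Fin.ext (by simpa using h))

theorem PSpiles_append_swap_of_lt {F₀ E D p : List ℕ} {R : List (List ℕ)} {t c x : ℕ}
    (hF : PSpiles (F₀ ++ [t]) = R ++ [t :: p]) (hR : ∀ q ∈ R, q.headI ≤ c) (hct : c < t)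
    (htx : t < x) (hE : ∀ e ∈ E, t < e) :
    PSpiles (F₀ ++ t :: E ++ c :: x :: D) = PSpiles (F₀ ++ t :: E ++ x :: c :: D) := by
  have hRt : ∀ e ∈ E, ∀ q ∈ R ++ [t :: p], q.headI ≤ e := by
    simp only [List.mem_append, List.mem_singleton]
    rintro e he q (hq | rfl)
    · exact (hR q hq).trans (hct.trans (hE e he)).le
    · exact (hE e he).le
  have hQ : PSpiles (F₀ ++ t :: E) = R ++ (t :: p) :: E.foldl (fun ps c => PSinsert c ps) [] := by
    rw [List.append_cons, PSpiles_append, hF]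
    simpa using foldl_PSinsert_append_of_headI_le hRt []
  simp only [PSpiles_append (F₀ ++ t :: E), hQ, List.foldl_cons, PSinsert_comm_of_lt hR hct htx]

def PilePreservingInterchange {n : ℕ} (σ τ : Equiv.Perm (Fin n)) : Prop :=
  AllowedInterchange σ τ ∧ PSpiles (permWord τ) = PSpiles (permWord σ)

theorem exists_reflTransGen_moveLeft {n : ℕ} {F₀ p : List ℕ} {R : List (List ℕ)} {t c : ℕ}
    (hF : PSpiles (F₀ ++ [t]) = R ++ [t :: p]) (hR : ∀ q ∈ R, q.headI ≤ c) (hct : c < t)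
    (E D : List ℕ) (σ : Equiv.Perm (Fin n)) (hσ : permWord σ = F₀ ++ t :: E ++ c :: D)
    (hE : ∀ e ∈ E, t < e) :
    ∃ τ, Relation.ReflTransGen PilePreservingInterchange σ τ ∧
      permWord τ = F₀ ++ t :: c :: E ++ D := by
  induction E using List.reverseRecOn generalizing σ D with
  | nil => exact ⟨σ, .refl, by simpa using hσ⟩
  | append_singleton E x ih =>
    have htx : t < x := hE x (by simp)
    have hE' : ∀ e ∈ E, t < e := fun e he => hE e (by simp [he])
    obtain ⟨τ, hστ, hτ⟩ := exists_allowedInterchange (F := F₀) (E := E) (D := D)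
      (by simpa using hσ) hct htx fun e he => hct.trans (hE' e he)
    have hpiles : PSpiles (permWord τ) = PSpiles (permWord σ) := by
      rw [hτ, hσ, show F₀ ++ t :: (E ++ [x]) ++ c :: D = F₀ ++ t :: E ++ x :: c :: D by simp]
      exact PSpiles_append_swap_of_lt hF hR hct htx hE'
    obtain ⟨ρ, hτρ, hρ⟩ := ih (x :: D) τ hτ hE'
    exact ⟨ρ, .head ⟨hστ, hpiles⟩ hτρ, by simp [hρ]⟩

theorem exists_reflTransGen_RPW_PSinsert {n : ℕ} {P : List (List ℕ)} (hP : ValidPiles P)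
    {σ : Equiv.Perm (Fin n)} {c : ℕ} {v : List ℕ} (hσ : permWord σ = RPW P ++ c :: v) :
    ∃ τ, Relation.ReflTransGen PilePreservingInterchange σ τ ∧
      permWord τ = RPW (PSinsert c P) ++ v := by
  rcases PSinsert_cases c P with ⟨-, h⟩ | ⟨R, x, p, Z, rfl, hR, hcx, h⟩ <;> rw [h]
  · exact ⟨σ, .refl, by simpa [RPW] using hσ⟩
  · have hF : PSpiles (RPW R ++ p.reverse ++ [x]) = R ++ [x :: p] := by
      simpa [RPW] using PSpiles_RPW (hP.sublist (P := R ++ [x :: p]) (by simp))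
    obtain ⟨τ, hστ, hτ⟩ := exists_reflTransGen_moveLeft hF hR hcx (RPW Z) v σ
      (by simpa [RPW] using hσ)
      fun e he => hP.headI_lt_of_mem_flatten (mem_RPW.1 he)
    exact ⟨τ, hστ, by simpa [RPW] using hτ⟩

theorem exists_reflTransGen_RPW_PSpiles_append {n : ℕ} (σ : Equiv.Perm (Fin n)) (u v : List ℕ)
    (hσ : permWord σ = u ++ v) :
    ∃ τ, Relation.ReflTransGen PilePreservingInterchange σ τ ∧
      permWord τ = RPW (PSpiles u) ++ v := by
  induction u using List.reverseRecOn generalizing v with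
  | nil => exact ⟨σ, .refl, hσ⟩
  | append_singleton u c ih =>
    obtain ⟨τ, hστ, hτ⟩ := ih (c :: v) (by simp [hσ])
    have hu : ValidPiles (PSpiles u) :=
      validPiles_PSpiles ((nodup_permWord σ).sublist (by simp [hσ]))
    obtain ⟨ρ, hτρ, hρ⟩ := exists_reflTransGen_RPW_PSinsert hu hτ
    exact ⟨ρ, hστ.trans hτρ, by rw [hρ, PSpiles_append]; rfl⟩

/-- Every permutation `σ` can be transformed into (a permutation whose
one-line word is) the reverse patience word `RPW(R(σ))` of its pile configuration by a
finite sequence of allowed interchanges, each of which preserves the pile configuration. -/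
theorem stmt8 (n : ℕ) (σ : Equiv.Perm (Fin n)) :
    ∃ τ : Equiv.Perm (Fin n),
      Relation.ReflTransGen
        (fun a b => AllowedInterchange a b ∧ PSpiles (permWord b) = PSpiles (permWord a))
        σ τ ∧
      permWord τ = RPW (PSpiles (permWord σ)) := by
  obtain ⟨τ, hστ, hτ⟩ := exists_reflTransGen_RPW_PSpiles_append σ (permWord σ) [] (by simp)
  exact ⟨τ, hστ, by simpa using hτ⟩
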